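/- For every GPOVM M and every g : G, the minimax risk is invariant under twisting: D_max (M_g) = D_max M. -/

import Mathlib

/-! Twisting by `g` is left translation by `g` followed by conjugation with the unitary `A g`,
so `M_g` is again positive, null on `∅` and countably additive. The phase `c g g'` cancels in the
rank-one state, so `A g ρ(g') A gᴴ = ρ(g g')` and, by cyclicity of the trace, the outcome law of
`M_g` in state `ρ(g')` is that of `M` in state `ρ(g g')` translated by `g⁻¹`. Covariance of `w`
then gives `D_pt M_g g' = D_pt M (g g')`, and the supremum over `g'` is unchanged by
reindexing along `g' ↦ g g'`. -/

open MeasureTheory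
open scoped Kronecker Matrix ComplexOrder

noncomputable section

namespace GroupEstimation

variable {G : Type} [Group G] [TopologicalSpace G] [IsTopologicalGroup G]
  [CompactSpace G] [T2Space G] [MeasurableSpace G] [BorelSpace G]

/-- Vectorization of a square matrix. -/
def vec {d : ℕ} (A : Matrix (Fin d) (Fin d) ℂ) : EuclideanSpace ℂ (Fin d × Fin d) :=
  WithLp.toLp 2 (fun p : Fin d × Fin d => A p.1 p.2)

/-- The rank-one state `|f(g)⟩⟩⟨⟨f(g)|`. -/
def rho {d : ℕ} (f : G → Matrix (Fin d) (Fin d) ℂ) (g : G) :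
    Matrix (Fin d × Fin d) (Fin d × Fin d) ℂ :=
  fun p q => f g p.1 p.2 * star (f g q.1 q.2)

/-- `A g = f g ⊗ₖ 1`. -/
def Amat {d : ℕ} (f : G → Matrix (Fin d) (Fin d) ℂ) (g : G) :
    Matrix (Fin d × Fin d) (Fin d × Fin d) ℂ :=
  f g ⊗ₖ (1 : Matrix (Fin d) (Fin d) ℂ)

/-- The average state `ρμ` (entrywise Bochner integral). -/
def rhoMu (μ : Measure G) {d : ℕ} (f : G → Matrix (Fin d) (Fin d) ℂ) :
    Matrix (Fin d × Fin d) (Fin d × Fin d) ℂ :=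
  fun p q => ∫ g, rho f g p q ∂μ

/-- positivity, vanishing at ∅ and countable additivity (the "measure part" of a GPOVM). -/
def IsPreGPOVM {d : ℕ} (M : Set G → Matrix (Fin d × Fin d) (Fin d × Fin d) ℂ) : Prop :=
  (∀ B : Set G, MeasurableSet B → (M B).PosSemidef) ∧ M ∅ = 0 ∧
    ∀ B : ℕ → Set G, (∀ j, MeasurableSet (B j)) → Pairwise (Function.onFun Disjoint B) →
      M (⋃ j, B j) = ∑' j, M (B j)

/-- Generalized POVM. -/
def IsGPOVM (μ : Measure G) {d : ℕ} (f : G → Matrix (Fin d) (Fin d) ℂ)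
    (M : Set G → Matrix (Fin d × Fin d) (Fin d × Fin d) ℂ) : Prop :=
  IsPreGPOVM M ∧ (M Set.univ * rhoMu μ f).trace = 1

/-- Covariance of a GPOVM. -/
def IsCovariant {d : ℕ} (f : G → Matrix (Fin d) (Fin d) ℂ)
    (M : Set G → Matrix (Fin d × Fin d) (Fin d × Fin d) ℂ) : Prop :=
  ∀ (g : G) (B : Set G), MeasurableSet B →
    M ((g * ·) '' B) = Amat f g * M B * (Amat f g)ᴴ

/-- The covariant GPOVM with seed `T`. -/
def MT (μ : Measure G) {d : ℕ} (f : G → Matrix (Fin d) (Fin d) ℂ)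
    (T : Matrix (Fin d × Fin d) (Fin d × Fin d) ℂ) (B : Set G) :
    Matrix (Fin d × Fin d) (Fin d × Fin d) ℂ :=
  fun p q => ∫ g in B, (Amat f g * T * (Amat f g)ᴴ) p q ∂μ

/-- Pointwise risk. -/
def Dpt {d : ℕ} (w : G → G → ℝ)
    (ν : (Set G → Matrix (Fin d × Fin d) (Fin d × Fin d) ℂ) → G → Measure G)
    (M : Set G → Matrix (Fin d × Fin d) (Fin d × Fin d) ℂ) (g : G) : ℝ :=
  ∫ gh, w g gh ∂(ν M g)

/-- Bayes risk. -/
def Dbayes (μ : Measure G) {d : ℕ} (w : G → G → ℝ)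
    (ν : (Set G → Matrix (Fin d × Fin d) (Fin d × Fin d) ℂ) → G → Measure G)
    (M : Set G → Matrix (Fin d × Fin d) (Fin d × Fin d) ℂ) : ℝ :=
  ∫ g, Dpt w ν M g ∂μ

/-- Minimax risk. -/
def Dmax {d : ℕ} (w : G → G → ℝ)
    (ν : (Set G → Matrix (Fin d × Fin d) (Fin d × Fin d) ℂ) → G → Measure G)
    (M : Set G → Matrix (Fin d × Fin d) (Fin d × Fin d) ℂ) : ℝ :=
  ⨆ g : G, Dpt w ν M g

/-- Twisted GPOVM `M_g`. -/
def twist {d : ℕ} (f : G → Matrix (Fin d) (Fin d) ℂ)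
    (M : Set G → Matrix (Fin d × Fin d) (Fin d × Fin d) ℂ) (g : G) (B : Set G) :
    Matrix (Fin d × Fin d) (Fin d × Fin d) ℂ :=
  (Amat f g)ᴴ * M ((g * ·) '' B) * Amat f g

/-- Matrix of the orthogonal projection onto span {v g}. -/
def P0 {d : ℕ} (f : G → Matrix (Fin d) (Fin d) ℂ) :
    Matrix (Fin d × Fin d) (Fin d × Fin d) ℂ :=
  Matrix.toEuclideanLin.symm
    ((Submodule.span ℂ (Set.range fun g => vec (f g))).subtype ∘ₗ
      (Submodule.orthogonalProjectionOnto (Submodule.span ℂ (Set.range fun g => vec (f g)))).toLinearMap)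

end GroupEstimation

namespace Matrix

variable {l m n R : Type*}

theorem conjTranspose_mul_tsum_mul [Fintype n] [DecidableEq n] [Ring R] [StarRing R]
    [TopologicalSpace R] [IsTopologicalRing R] [T2Space R] {ι : Type*}
    {U : Matrix n n R} (hU : U ∈ unitary (Matrix n n R)) (N : ι → Matrix n n R) :
    Uᴴ * (∑' j, N j) * U = ∑' j, Uᴴ * N j * U :=
  Function.LeftInverse.map_tsum (g := (AddMonoidHom.mulRight U).comp (AddMonoidHom.mulLeft Uᴴ)) N
    ((continuous_const.matrix_mul continuous_id).matrix_mul continuous_const)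
    (g' := fun X => U * X * Uᴴ)
    ((continuous_const.matrix_mul continuous_id).matrix_mul continuous_const)
    fun X => by
      have h : U * Uᴴ = 1 := Unitary.mul_star_self_of_mem hU
      change U * (Uᴴ * X * U) * Uᴴ = X
      rw [Matrix.mul_assoc, Matrix.mul_assoc, h, Matrix.mul_one, ← Matrix.mul_assoc, h,
        Matrix.one_mul]

theorem kronecker_one_mulVec_uncurry [Fintype m] [Fintype n] [DecidableEq n] [CommSemiring R]
    (X : Matrix l m R) (Y : Matrix m n R) :
    (X ⊗ₖ (1 : Matrix n n R)) *ᵥ Function.uncurry Y = Function.uncurry (X * Y) := by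
  ext ⟨i, k⟩
  simp only [mulVec, dotProduct, kroneckerMap_apply, one_apply, mul_ite, mul_one, mul_zero,
    ite_mul, zero_mul, Fintype.sum_prod_type, Finset.sum_ite_eq, Finset.mem_univ, ↓reduceIte]
  rfl

theorem mul_vecMulVec_star_mul_conjTranspose [Fintype m] [CommSemiring R] [StarRing R]
    (A : Matrix n m R) (x : m → R) :
    A * vecMulVec x (star x) * Aᴴ = vecMulVec (A *ᵥ x) (star (A *ᵥ x)) := by
  rw [mul_vecMulVec, vecMulVec_mul, star_mulVec]

theorem vecMulVec_smul_star_smul {𝕜 : Type*} [RCLike 𝕜] {c : 𝕜} (hc : ‖c‖ = 1) (x : n → 𝕜) :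
    vecMulVec (c • x) (star (c • x)) = vecMulVec x (star x) := by
  rw [star_smul, smul_vecMulVec, vecMulVec_smul, smul_smul, RCLike.star_def, RCLike.mul_conj, hc]
  simp

end Matrix

namespace GroupEstimation

open Matrix

section Measurable

variable {G : Type} [MeasurableSpace G] {d : ℕ}
  {M : Set G → Matrix (Fin d × Fin d) (Fin d × Fin d) ℂ}

theorem IsPreGPOVM.conj (hM : IsPreGPOVM M) {U : Matrix (Fin d × Fin d) (Fin d × Fin d) ℂ}
    (hU : U ∈ unitary (Matrix (Fin d × Fin d) (Fin d × Fin d) ℂ)) :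
    IsPreGPOVM fun B => Uᴴ * M B * U := by
  obtain ⟨hpos, hempty, hadd⟩ := hM
  refine ⟨fun B hB => (hpos B hB).conjTranspose_mul_mul_same U, by simp [hempty],
    fun B hB hdisj => ?_⟩
  simp only [hadd B hB hdisj, conjTranspose_mul_tsum_mul hU]

theorem IsPreGPOVM.comp_image_mul [Group G] [MeasurableMul G] (hM : IsPreGPOVM M) (g : G) :
    IsPreGPOVM fun B => M ((g * ·) '' B) := by
  obtain ⟨hpos, hempty, hadd⟩ := hM
  have hmeas {B : Set G} (hB : MeasurableSet B) : MeasurableSet ((g * ·) '' B) :=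
    (MeasurableEquiv.mulLeft g).measurableSet_image.2 hB
  refine ⟨fun B hB => hpos _ (hmeas hB), by simp [hempty], fun B hB hdisj => ?_⟩
  simp only [Set.image_iUnion]
  exact hadd _ (fun j => hmeas (hB j))
    fun i j hij => Set.disjoint_image_of_injective (mul_right_injective g) (hdisj hij)

end Measurable

section Twist

variable {G : Type} {d : ℕ} {f : G → Matrix (Fin d) (Fin d) ℂ}

theorem Amat_mem_unitary (hf : ∀ g, f g ∈ unitaryGroup (Fin d) ℂ) (g : G) :
    Amat f g ∈ unitary (Matrix (Fin d × Fin d) (Fin d × Fin d) ℂ) :=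
  kronecker_mem_unitary (hf g) (one_mem _)

theorem rho_eq_vecMulVec (g : G) :
    rho f g = vecMulVec (Function.uncurry (f g)) (star (Function.uncurry (f g))) :=
  rfl

variable [Group G]

theorem IsPreGPOVM.twist [MeasurableSpace G] [MeasurableMul G]
    {M : Set G → Matrix (Fin d × Fin d) (Fin d × Fin d) ℂ} (hM : IsPreGPOVM M)
    (hf : ∀ g, f g ∈ unitaryGroup (Fin d) ℂ) (g : G) : IsPreGPOVM (twist f M g) :=
  (hM.comp_image_mul g).conj (Amat_mem_unitary hf g)

theorem Amat_mul_rho_mul_conjTranspose {c : G → G → ℂ} (hc_norm : ∀ g h : G, ‖c g h‖ = 1)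
    (hc_proj : ∀ g h : G, f (g * h) = c g h • (f g * f h)) (g g' : G) :
    Amat f g * rho f g' * (Amat f g)ᴴ = rho f (g * g') := by
  rw [rho_eq_vecMulVec, mul_vecMulVec_star_mul_conjTranspose, Amat, kronecker_one_mulVec_uncurry,
    rho_eq_vecMulVec, hc_proj]
  exact (vecMulVec_smul_star_smul (hc_norm g g') _).symm

theorem trace_twist_mul_rho (M : Set G → Matrix (Fin d × Fin d) (Fin d × Fin d) ℂ) {g g' : G}
    (hρ : Amat f g * rho f g' * (Amat f g)ᴴ = rho f (g * g')) (B : Set G) :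
    (twist f M g B * rho f g').trace = (M ((g * ·) '' B) * rho f (g * g')).trace := by
  rw [twist, ← hρ]
  simp only [Matrix.mul_assoc]
  rw [trace_mul_comm]
  simp only [Matrix.mul_assoc]

end Twist

section Risk

variable {G : Type} [Group G] [MeasurableSpace G] [MeasurableMul G] {d : ℕ}
  {f : G → Matrix (Fin d) (Fin d) ℂ}
  {ν : (Set G → Matrix (Fin d × Fin d) (Fin d × Fin d) ℂ) → G → Measure G}
  {M : Set G → Matrix (Fin d × Fin d) (Fin d × Fin d) ℂ}

def IsOutcomeLaw (f : G → Matrix (Fin d) (Fin d) ℂ)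
    (ν : (Set G → Matrix (Fin d × Fin d) (Fin d × Fin d) ℂ) → G → Measure G) : Prop :=
  ∀ M : Set G → Matrix (Fin d × Fin d) (Fin d × Fin d) ℂ, IsPreGPOVM M →
    ∀ (g : G) (B : Set G), MeasurableSet B →
      ν M g B = ENNReal.ofReal ((M B * rho f g).trace).re

theorem IsOutcomeLaw.twist_eq_map (hν : IsOutcomeLaw f ν) (hf : ∀ g, f g ∈ unitaryGroup (Fin d) ℂ)
    (hρ : ∀ g g', Amat f g * rho f g' * (Amat f g)ᴴ = rho f (g * g')) (hM : IsPreGPOVM M)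
    (g g' : G) :
    ν (twist f M g) g' = (ν M (g * g')).map (MeasurableEquiv.mulLeft g).symm := by
  ext B hB
  rw [MeasurableEquiv.map_apply, ← MeasurableEquiv.image_eq_preimage_symm,
    hν _ (hM.twist hf g) g' B hB, trace_twist_mul_rho M (hρ g g'),
    hν M hM _ _ ((MeasurableEquiv.mulLeft g).measurableSet_image.2 hB)]
  rfl

theorem Dpt_twist (hν : IsOutcomeLaw f ν) (hf : ∀ g, f g ∈ unitaryGroup (Fin d) ℂ)
    (hρ : ∀ g g', Amat f g * rho f g' * (Amat f g)ᴴ = rho f (g * g'))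
    {w : G → G → ℝ} (hw_cov : ∀ g gh g' : G, w (g' * g) (g' * gh) = w g gh)
    (hM : IsPreGPOVM M) (g g' : G) :
    Dpt w ν (twist f M g) g' = Dpt w ν M (g * g') := by
  rw [Dpt, Dpt, hν.twist_eq_map hf hρ hM, integral_map_equiv]
  congr 1 with x
  simpa using (hw_cov g' (g⁻¹ * x) g).symm

end Risk

theorem Dmax_twist_general
    {G : Type} [Group G] [TopologicalSpace G] [IsTopologicalGroup G]
    [MeasurableSpace G] [BorelSpace G]
    (μ : Measure G)
    {d : ℕ} (f : G → Matrix (Fin d) (Fin d) ℂ)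
    (hf_unitary : ∀ g : G, f g ∈ Matrix.unitaryGroup (Fin d) ℂ)
    (c : G → G → ℂ) (hc_norm : ∀ g h : G, ‖c g h‖ = 1)
    (hc_proj : ∀ g h : G, f (g * h) = c g h • (f g * f h))
    (w : G → G → ℝ)
    (hw_cov : ∀ g gh g' : G, w (g' * g) (g' * gh) = w g gh)
    (ν : (Set G → Matrix (Fin d × Fin d) (Fin d × Fin d) ℂ) → G → Measure G)
    (hν : ∀ M : Set G → Matrix (Fin d × Fin d) (Fin d × Fin d) ℂ, IsPreGPOVM M →
      ∀ (g : G) (B : Set G), MeasurableSet B →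
        ν M g B = ENNReal.ofReal ((M B * rho f g).trace).re)
    (M : Set G → Matrix (Fin d × Fin d) (Fin d × Fin d) ℂ)
    (hM : IsGPOVM μ f M) (g : G) :
    Dmax w ν (twist f M g) = Dmax w ν M := by
  have hρ := Amat_mul_rho_mul_conjTranspose hc_norm hc_proj
  rw [Dmax, Dmax, iSup_congr (Dpt_twist hν hf_unitary hρ hw_cov hM.1 g)]
  exact (Equiv.mulLeft g).iSup_comp

/-- The minimax risk is invariant under twisting. -/
theorem Dmax_twist
    {G : Type} [Group G] [TopologicalSpace G] [IsTopologicalGroup G]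
    [CompactSpace G] [T2Space G] [MeasurableSpace G] [BorelSpace G]
    (μ : Measure G) [μ.IsHaarMeasure] [IsProbabilityMeasure μ]
    {d : ℕ} (hd : 0 < d) (f : G → Matrix (Fin d) (Fin d) ℂ)
    (hf_cont : Continuous f) (hf_one : f 1 = 1)
    (hf_unitary : ∀ g : G, f g ∈ Matrix.unitaryGroup (Fin d) ℂ)
    (c : G → G → ℂ) (hc_norm : ∀ g h : G, ‖c g h‖ = 1)
    (hc_proj : ∀ g h : G, f (g * h) = c g h • (f g * f h))
    (w : G → G → ℝ) (hw_cont : Continuous fun p : G × G => w p.1 p.2)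
    (hw_bdd : ∃ C : ℝ, ∀ g gh : G, |w g gh| ≤ C)
    (hw_cov : ∀ g gh g' : G, w (g' * g) (g' * gh) = w g gh)
    (ν : (Set G → Matrix (Fin d × Fin d) (Fin d × Fin d) ℂ) → G → Measure G)
    (hν : ∀ M : Set G → Matrix (Fin d × Fin d) (Fin d × Fin d) ℂ, IsPreGPOVM M →
      ∀ (g : G) (B : Set G), MeasurableSet B →
        ν M g B = ENNReal.ofReal ((M B * rho f g).trace).re)
    (M : Set G → Matrix (Fin d × Fin d) (Fin d × Fin d) ℂ)
    (hM : IsGPOVM μ f M) (g : G) :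
    Dmax w ν (twist f M g) = Dmax w ν M :=
  Dmax_twist_general μ f hf_unitary c hc_norm hc_proj w hw_cov ν hν M hM g

end GroupEstimation
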